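/- arXiv:2409.19235 — 9 statements merged into one kernel-verified Lean document; each statement's English description precedes it below -/
import Mathlib

section
/- Let τ ∈ ℂ satisfy τ² + τ + 1 = 0. Let E be the pencil diagram of 4-tuples of integers. Then for every diagram entry (i,j) with i ≥ 2 (where 1 ≤ j ≤ i/2 + 1 if i is even and 1 ≤ j ≤ (i−1)/2 + 1 if i is odd), writing E(i,j) = (D, m₁, m_τ, m_{τ²}), one has 3 ∣ D and D/3 − 1 = c(i,j)² + d(i,j)² − c(i,j)·d(i,j) − c(i,j) + d(i,j), where the integers c(i,j), d(i,j) are given by: if i is even, c(i,j) = 1 − j and d(i,j) = i/2 + 1 − j; if i is odd, c(i,j) = j and d(i,j) = j − (i−1)/2 − 2. (The quantity D/3 − 1 is the degree of the rational curve Cr_{i,j} at entry (i,j) of the diagram of bifurcations of Cremona maps.) -/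
/-- Effect of the quadratic Cremona map `Q₁` (indeterminacy at `P₃(1)`) on the
degree/multiplicity data `(d, m₁, m_τ, m_{τ²})`. -/
def cremQ1 (v : ℤ × ℤ × ℤ × ℤ) : ℤ × ℤ × ℤ × ℤ :=
  (2 * v.1 - 3 * v.2.1, v.1 - 2 * v.2.1, v.2.2.2, v.2.2.1)

/-- Effect of the quadratic Cremona map `Q_τ` (indeterminacy at `P₃(τ)`). -/
def cremQt (v : ℤ × ℤ × ℤ × ℤ) : ℤ × ℤ × ℤ × ℤ :=
  (2 * v.1 - 3 * v.2.2.1, v.2.2.2, v.1 - 2 * v.2.2.1, v.2.1)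

/-- Effect of the quadratic Cremona map `Q_{τ²}` (indeterminacy at `P₃(τ²)`). -/
def cremQt2 (v : ℤ × ℤ × ℤ × ℤ) : ℤ × ℤ × ℤ × ℤ :=
  (2 * v.1 - 3 * v.2.2.2, v.2.2.1, v.2.1, v.1 - 2 * v.2.2.2)

/-- `E` is the pencil diagram of `4`-tuples of integers: `E (1,1) = (6,3,1,1)`,
`E (2k,1) = Q_τ (E (2k-1,1))` for `k ≥ 1`, `E (2k+1,j) = Q₁ (E (2k,j))` for all valid `j`
(row `2k` and row `2k+1` have `k+1` columns), and `E (2k,j+1) = Q_{τ²} (Q_τ (E (2k,j)))`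
for all valid `j`. -/
def IsPencilDiagram (E : ℕ → ℕ → ℤ × ℤ × ℤ × ℤ) : Prop :=
  E 1 1 = (6, 3, 1, 1) ∧
  (∀ k : ℕ, 1 ≤ k → E (2 * k) 1 = cremQt (E (2 * k - 1) 1)) ∧
  (∀ k j : ℕ, 1 ≤ k → 1 ≤ j → j ≤ k + 1 → E (2 * k + 1) j = cremQ1 (E (2 * k) j)) ∧
  (∀ k j : ℕ, 1 ≤ k → 1 ≤ j → j ≤ k → E (2 * k) (j + 1) = cremQt2 (cremQt (E (2 * k) j)))

/-- Closed form for the even-row entries of the pencil diagram. -/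
def pencilF (k j : ℕ) : ℤ × ℤ × ℤ × ℤ :=
  (3 * ((k : ℤ) ^ 2 - k * j + j ^ 2 + 2 * k - 2 * j + 2),
   (k : ℤ) ^ 2 - k * j + j ^ 2 + k - 2 * j + 1,
   (k : ℤ) ^ 2 - k * j + j ^ 2 + 3 * k - 3 * j + 3,
   (k : ℤ) ^ 2 - k * j + j ^ 2 + 2 * k - j + 1)

lemma pencil_closed_form (E : ℕ → ℕ → ℤ × ℤ × ℤ × ℤ) (hE : IsPencilDiagram E) :
    ∀ k j : ℕ, 1 ≤ k → 1 ≤ j → j ≤ k + 1 → E (2 * k) j = pencilF k j := by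
  obtain ⟨h1, hcol, hodd, hnext⟩ := hE
  have col1 : ∀ k : ℕ, 1 ≤ k → E (2 * k) 1 = pencilF k 1 := by
    intro k hk
    induction k with
    | zero => omega
    | succ k ih =>
      rcases Nat.lt_or_ge k 1 with hk0 | hk1
      · interval_cases k
        have := hcol 1 (by norm_num)
        simp only [show 2 * 1 - 1 = 1 from rfl] at this
        rw [this, h1]
        simp [cremQt, pencilF]
      · have e1 := hcol (k + 1) (by omega)
        have e2 := hodd k 1 hk1 le_rfl (by omega)
        have e3 := ih hk1
        rw [show 2 * (k + 1) - 1 = 2 * k + 1 by omega] at e1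
        rw [e1, e2, e3]
        simp only [pencilF, cremQ1, cremQt, Prod.mk.injEq]
        push_cast
        refine ⟨by ring, by ring, by ring, by ring⟩
  intro k j hk hj hjk
  induction j with
  | zero => omega
  | succ j ih =>
    rcases Nat.lt_or_ge j 1 with hj0 | hj1
    · interval_cases j
      exact col1 k hk
    · have e1 := hnext k j hk hj1 (by omega)
      rw [e1, ih hj1 (by omega)]
      simp only [pencilF, cremQt, cremQt2, Prod.mk.injEq]
      push_cast
      refine ⟨by ring, by ring, by ring, by ring⟩

/-- For every diagram entry `(i,j)` with `i ≥ 2` (even rows `i = 2k`, odd rows `i = 2k+1`,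
with `k ≥ 1` and `1 ≤ j ≤ k+1`), writing `E (i,j) = (D, m₁, m_τ, m_{τ²})`, one has `3 ∣ D`
and `D/3 - 1 = c² + d² - c·d - c + d`, where for even `i`: `c = 1 - j`, `d = i/2 + 1 - j`,
and for odd `i`: `c = j`, `d = j - (i-1)/2 - 2`. -/
theorem degree_of_rational_curve_in_diagram
    (τ : ℂ) (hτ : τ ^ 2 + τ + 1 = 0)
    (E : ℕ → ℕ → ℤ × ℤ × ℤ × ℤ) (hE : IsPencilDiagram E) :
    ∀ k j : ℕ, 1 ≤ k → 1 ≤ j → j ≤ k + 1 →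
      ((3 ∣ (E (2 * k) j).1) ∧
        (E (2 * k) j).1 / 3 - 1 =
          (1 - (j : ℤ)) ^ 2 + ((k : ℤ) + 1 - (j : ℤ)) ^ 2
            - (1 - (j : ℤ)) * ((k : ℤ) + 1 - (j : ℤ))
            - (1 - (j : ℤ)) + ((k : ℤ) + 1 - (j : ℤ))) ∧
      ((3 ∣ (E (2 * k + 1) j).1) ∧
        (E (2 * k + 1) j).1 / 3 - 1 =
          (j : ℤ) ^ 2 + ((j : ℤ) - (k : ℤ) - 2) ^ 2
            - (j : ℤ) * ((j : ℤ) - (k : ℤ) - 2)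
            - (j : ℤ) + ((j : ℤ) - (k : ℤ) - 2)) := by
  intro k j hk hj hjk
  have hev := pencil_closed_form E hE k j hk hj hjk
  have hod := hE.2.2.1 k j hk hj hjk
  rw [hev] at hod
  constructor
  · rw [hev]
    constructor
    · exact ⟨_, rfl⟩
    · rw [pencilF, Int.mul_ediv_cancel_left _ (by norm_num)]
      ring
  · rw [hod]
    have h3 : (cremQ1 (pencilF k j)).1 =
        3 * ((k : ℤ) ^ 2 - k * j + j ^ 2 + 3 * k - 2 * j + 3) := by
      simp only [cremQ1, pencilF]
      ring
    rw [h3]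
    constructor
    · exact ⟨_, rfl⟩
    · rw [Int.mul_ediv_cancel_left _ (by norm_num)]
      ring
end

section
/- Let τ ∈ ℂ satisfy τ² + τ + 1 = 0 and let t be any parameter diagram. Then: (a) t(2i,1) = (2−τ) + (i−1)(1−τ) for all i ≥ 1; (b) t(2i+1,1) = (−3+τ) − (i−1)(1−τ) for all i ≥ 1; (c) t(2i,j) = t(2i,1) + (j−1)(1+2τ) for all i ≥ 1 and all valid j; (d) t(2i+1,j) = t(2i+1,1) − (j−1)(1+2τ) for all i ≥ 1 and all valid j. -/
/-- `q₁ (t) = -t - 1`, the effect of the Cremona map `Q₁` on the parameter. -/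
def paramQ1 (t : ℂ) : ℂ := -t - 1

/-- `q_τ (t) = -t - τ`, the effect of the Cremona map `Q_τ` on the parameter. -/
def paramQt (τ t : ℂ) : ℂ := -t - τ

/-- `q_{τ²} (t) = -t - τ²`, the effect of the Cremona map `Q_{τ²}` on the parameter. -/
def paramQt2 (τ t : ℂ) : ℂ := -t - τ ^ 2

/-- `t` is a parameter diagram: `t (1,1) = -2`, `t (2,1) = q_τ (t (1,1))`,
`t (3,1) = q₁ (t (2,1))`; for all `i ≥ 1`, `t (2i+2,1) = q_τ (q₁ (t (2i,1)))` and
`t (2i+3,1) = q₁ (q_τ (t (2i+1,1)))`; and for all valid `j` (rows `2i` and `2i+1`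
have `i+1` columns, so `1 ≤ j ≤ i`), `t (2i,j+1) = q_{τ²} (q_τ (t (2i,j)))` and
`t (2i+1,j+1) = q₁ (q_{τ²} (q_τ (q₁ (t (2i+1,j)))))`. -/
def IsParamDiagram (τ : ℂ) (t : ℕ → ℕ → ℂ) : Prop :=
  t 1 1 = -2 ∧
  t 2 1 = paramQt τ (t 1 1) ∧
  t 3 1 = paramQ1 (t 2 1) ∧
  (∀ i : ℕ, 1 ≤ i → t (2 * i + 2) 1 = paramQt τ (paramQ1 (t (2 * i) 1))) ∧
  (∀ i : ℕ, 1 ≤ i → t (2 * i + 3) 1 = paramQ1 (paramQt τ (t (2 * i + 1) 1))) ∧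
  (∀ i j : ℕ, 1 ≤ i → 1 ≤ j → j ≤ i →
    t (2 * i) (j + 1) = paramQt2 τ (paramQt τ (t (2 * i) j))) ∧
  (∀ i j : ℕ, 1 ≤ i → 1 ≤ j → j ≤ i →
    t (2 * i + 1) (j + 1) = paramQ1 (paramQt2 τ (paramQt τ (paramQ1 (t (2 * i + 1) j)))))

/-- (a) `t (2i,1) = (2-τ) + (i-1)(1-τ)` for all `i ≥ 1`;
(b) `t (2i+1,1) = (-3+τ) - (i-1)(1-τ)` for all `i ≥ 1`;
(c) `t (2i,j) = t (2i,1) + (j-1)(1+2τ)` for all `i ≥ 1` and all valid `j`;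
(d) `t (2i+1,j) = t (2i+1,1) - (j-1)(1+2τ)` for all `i ≥ 1` and all valid `j`. -/
theorem param_formulas (τ : ℂ) (hτ : τ ^ 2 + τ + 1 = 0)
    (t : ℕ → ℕ → ℂ) (ht : IsParamDiagram τ t) :
    (∀ i : ℕ, 1 ≤ i → t (2 * i) 1 = (2 - τ) + ((i : ℂ) - 1) * (1 - τ)) ∧
    (∀ i : ℕ, 1 ≤ i → t (2 * i + 1) 1 = (-3 + τ) - ((i : ℂ) - 1) * (1 - τ)) ∧
    (∀ i j : ℕ, 1 ≤ i → 1 ≤ j → j ≤ i + 1 →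
      t (2 * i) j = t (2 * i) 1 + ((j : ℂ) - 1) * (1 + 2 * τ)) ∧
    (∀ i j : ℕ, 1 ≤ i → 1 ≤ j → j ≤ i + 1 →
      t (2 * i + 1) j = t (2 * i + 1) 1 - ((j : ℂ) - 1) * (1 + 2 * τ)) := by
  obtain ⟨h11, h21, h31, heven, hodd, hevenj, hoddj⟩ := ht
  have hτ2 : τ ^ 2 = -τ - 1 := by linear_combination hτ
  have ha : ∀ i : ℕ, 1 ≤ i → t (2 * i) 1 = (2 - τ) + ((i : ℂ) - 1) * (1 - τ) := by
    intro i hi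
    induction i, hi using Nat.le_induction with
    | base => simp only [Nat.cast_one, h21, h11, paramQt]; ring
    | succ n hn ih =>
      have := heven n hn
      rw [show 2 * (n + 1) = 2 * n + 2 by ring, this, ih]
      simp [paramQt, paramQ1]
      push_cast
      ring
  have hb : ∀ i : ℕ, 1 ≤ i → t (2 * i + 1) 1 = (-3 + τ) - ((i : ℂ) - 1) * (1 - τ) := by
    intro i hi
    induction i, hi using Nat.le_induction with
    | base =>
      have : t 3 1 = paramQ1 (t 2 1) := h31
      rw [show 2 * 1 + 1 = 3 by ring, this, h21, h11]
      simp [paramQt, paramQ1]; ring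
    | succ n hn ih =>
      have := hodd n hn
      rw [show 2 * (n + 1) + 1 = 2 * n + 3 by ring, this, ih]
      simp [paramQt, paramQ1]
      push_cast
      ring
  refine ⟨ha, hb, ?_, ?_⟩
  · intro i j hi hj hji
    induction j, hj using Nat.le_induction with
    | base => simp
    | succ n hn ih =>
      have hni : n ≤ i := by omega
      have := hevenj i n hi hn hni
      rw [this, ih (by omega)]
      simp [paramQt, paramQt2, hτ2]
      push_cast
      ring
  · intro i j hi hj hji
    induction j, hj using Nat.le_induction with
    | base => simp
    | succ n hn ih =>
      have hni : n ≤ i := by omega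
      have := hoddj i n hi hn hni
      rw [this, ih (by omega)]
      simp [paramQt, paramQt2, paramQ1, hτ2]
      push_cast
      ring
end

section
/- Let τ ∈ ℂ satisfy τ² + τ + 1 = 0 and let t be any parameter diagram. Then for every diagram entry (i,j) there exist integers m, n with t(i,j) = m + n·τ and m + n ≡ 1 (mod 3). -/
/-- For every diagram entry `(i,j)` there exist integers `m, n` with
`t (i,j) = m + n·τ` and `m + n ≡ 1 (mod 3)`. -/
theorem param_is_eisenstein_cong_one (τ : ℂ) (hτ : τ ^ 2 + τ + 1 = 0)
    (t : ℕ → ℕ → ℂ) (ht : IsParamDiagram τ t) :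
    (∃ m n : ℤ, t 1 1 = (m : ℂ) + (n : ℂ) * τ ∧ Int.ModEq 3 (m + n) 1) ∧
    (∀ i j : ℕ, 1 ≤ i → 1 ≤ j → j ≤ i + 1 →
      (∃ m n : ℤ, t (2 * i) j = (m : ℂ) + (n : ℂ) * τ ∧ Int.ModEq 3 (m + n) 1) ∧
      (∃ m n : ℤ, t (2 * i + 1) j = (m : ℂ) + (n : ℂ) * τ ∧ Int.ModEq 3 (m + n) 1)) := by
  obtain ⟨h11, h21, h31, heven, hodd, hcolE, hcolO⟩ := ht
  set P : ℂ → Prop := fun z =>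
    ∃ m n : ℤ, z = (m : ℂ) + (n : ℂ) * τ ∧ Int.ModEq 3 (m + n) 1 with hP
  have pQ1 : ∀ z, P z → P (paramQ1 z) := by
    rintro z ⟨m, n, hz, hmn⟩
    refine ⟨-m - 1, -n, ?_, ?_⟩
    · rw [paramQ1, hz]; push_cast; ring
    · unfold Int.ModEq at *; omega
  have pQt : ∀ z, P z → P (paramQt τ z) := by
    rintro z ⟨m, n, hz, hmn⟩
    refine ⟨-m, -n - 1, ?_, ?_⟩
    · rw [paramQt, hz]; push_cast; ring
    · unfold Int.ModEq at *; omega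
  have pQt2 : ∀ z, P z → P (paramQt2 τ z) := by
    rintro z ⟨m, n, hz, hmn⟩
    refine ⟨-m + 1, -n + 1, ?_, ?_⟩
    · rw [paramQt2, hz]; push_cast; linear_combination -hτ
    · unfold Int.ModEq at *; omega
  have base : P (t 1 1) := ⟨-2, 0, by rw [h11]; push_cast; ring, by decide⟩
  have hrow : ∀ i, 1 ≤ i → P (t (2 * i) 1) ∧ P (t (2 * i + 1) 1) := by
    intro i hi
    induction i with
    | zero => omega
    | succ k ih =>
      rcases Nat.lt_or_ge k 1 with h1 | h1
      · have hk : k = 0 := by omega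
        subst hk
        exact ⟨by rw [show 2 * 1 = 2 from rfl, h21]; exact pQt _ base,
               by rw [show 2 * 1 + 1 = 3 from rfl, h31, h21]; exact pQ1 _ (pQt _ base)⟩
      · obtain ⟨he, ho⟩ := ih h1
        constructor
        · rw [show 2 * (k + 1) = 2 * k + 2 from by ring, heven k h1]
          exact pQt _ (pQ1 _ he)
        · rw [show 2 * (k + 1) + 1 = 2 * k + 3 from by ring, hodd k h1]
          exact pQ1 _ (pQt _ ho)
  have hcol : ∀ i, 1 ≤ i → ∀ j, 1 ≤ j → j ≤ i + 1 →
      P (t (2 * i) j) ∧ P (t (2 * i + 1) j) := by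
    intro i hi j
    induction j with
    | zero => omega
    | succ k ih =>
      intro hj hji
      rcases Nat.lt_or_ge k 1 with h1 | h1
      · have hk : k = 0 := by omega
        subst hk
        exact hrow i hi
      · obtain ⟨he, ho⟩ := ih h1 (by omega)
        have hki : k ≤ i := by omega
        exact ⟨by rw [hcolE i k hi h1 hki]; exact pQt2 _ (pQt _ he),
               by rw [hcolO i k hi h1 hki]; exact pQ1 _ (pQt2 _ (pQt _ (pQ1 _ ho)))⟩
  exact ⟨base, fun i j hi hj hji => hcol i hi j hj hji⟩
end

section
/- Let τ ∈ ℂ satisfy τ² + τ + 1 = 0 and let t be any parameter diagram. Then for every diagram entry (i,j) one has t(i,j) − 1 = (−2−τ)·(c(i,j) + d(i,j)·τ), where c(1,1) = 1, d(1,1) = −1, and for i ≥ 2: if i is even and 1 ≤ j ≤ i/2+1 then c(i,j) = 1 − j and d(i,j) = i/2 + 1 − j (in particular c(i,1) = 0 and d(i,1) = i/2); if i is odd and 1 ≤ j ≤ (i−1)/2+1 then c(i,j) = j and d(i,j) = j − (i−1)/2 − 2 (in particular c(i,1) = 1 and d(i,1) = −(i−1)/2 − 1). -/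
/-- For every diagram entry `(i,j)` one has `t (i,j) - 1 = (-2-τ)·(c + d·τ)`, where
`c (1,1) = 1`, `d (1,1) = -1`, and for `i ≥ 2`: if `i = 2k` is even and `1 ≤ j ≤ k+1`
then `c = 1 - j`, `d = i/2 + 1 - j`; if `i = 2k+1` is odd and `1 ≤ j ≤ k+1` then
`c = j`, `d = j - (i-1)/2 - 2`. -/
theorem param_quotient_formula (τ : ℂ) (hτ : τ ^ 2 + τ + 1 = 0)
    (t : ℕ → ℕ → ℂ) (ht : IsParamDiagram τ t) :
    (t 1 1 - 1 = (-2 - τ) * ((1 : ℂ) + (-1 : ℂ) * τ)) ∧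
    (∀ i j : ℕ, 1 ≤ i → 1 ≤ j → j ≤ i + 1 →
      (t (2 * i) j - 1 = (-2 - τ) * ((1 - (j : ℂ)) + ((i : ℂ) + 1 - (j : ℂ)) * τ)) ∧
      (t (2 * i + 1) j - 1 = (-2 - τ) * ((j : ℂ) + ((j : ℂ) - (i : ℂ) - 2) * τ))) := by
  obtain ⟨h11, h21, h31, heven1, hodd1, hevenj, hoddj⟩ := ht
  have col1 : ∀ i : ℕ, 1 ≤ i →
      (t (2 * i) 1 - 1 = (-2 - τ) * ((i : ℂ) * τ)) ∧
      (t (2 * i + 1) 1 - 1 = (-2 - τ) * (1 + (-(i : ℂ) - 1) * τ)) := by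
    intro i hi
    induction i, hi using Nat.le_induction with
    | base =>
      constructor
      · show t 2 1 - 1 = _
        rw [h21, h11]; unfold paramQt; push_cast; linear_combination hτ
      · show t 3 1 - 1 = _
        rw [h31, h21, h11]; unfold paramQ1 paramQt; push_cast
        linear_combination -2 * hτ
    | succ i hi ih =>
      obtain ⟨ih1, ih2⟩ := ih
      constructor
      · have e : 2 * (i + 1) = 2 * i + 2 := by ring
        rw [e, heven1 i hi]; unfold paramQt paramQ1; push_cast
        linear_combination ih1 + hτ
      · have e : 2 * (i + 1) + 1 = 2 * i + 3 := by ring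
        rw [e, hodd1 i hi]; unfold paramQ1 paramQt; push_cast
        linear_combination ih2 - hτ
  refine ⟨by rw [h11]; linear_combination -hτ, ?_⟩
  intro i j hi hj hji
  induction j, hj using Nat.le_induction with
  | base =>
    obtain ⟨c1, c2⟩ := col1 i hi
    constructor
    · rw [c1]; push_cast; ring
    · rw [c2]; push_cast; ring
  | succ j hj ih =>
    have hji' : j ≤ i := Nat.lt_succ_iff.mp hji
    obtain ⟨ih1, ih2⟩ := ih (le_trans hji' (Nat.le_succ i))
    constructor
    · rw [hevenj i j hi hj hji']; unfold paramQt2 paramQt; push_cast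
      linear_combination ih1 - 2 * hτ
    · rw [hoddj i j hi hj hji']; unfold paramQ1 paramQt2 paramQt; push_cast
      linear_combination ih2 + 2 * hτ
end

section
/- Let E be the pencil diagram of 4-tuples of integers. For every diagram entry (i,j), the first component D of E(i,j) (the degree of the generic element of the elliptic pencil at that entry) satisfies D = 3·(1 + c(i,j)² + d(i,j)² − c(i,j) + d(i,j) − c(i,j)·d(i,j)), where c(1,1) = 1, d(1,1) = −1, and for i ≥ 2: if i is even and 1 ≤ j ≤ i/2+1 then c(i,j) = 1 − j and d(i,j) = i/2 + 1 − j; if i is odd and 1 ≤ j ≤ (i−1)/2+1 then c(i,j) = j and d(i,j) = j − (i−1)/2 − 2. -/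
/-!
Below row 1, the entries of rows `2k` and `2k + 1` are quadratic polynomials `evenRow k j` and
`oddRow k j` in the indices. That these closed forms are carried into each other by the three
moves of the recursion (`Q₁` from row `2k` to row `2k + 1`, `Q_{τ²} ∘ Q_τ` one column to the
right, `Q_τ` from `(2k + 1, 1)` to `(2k + 2, 1)`) is a polynomial identity, so induction over
columns and then rows identifies the diagram, and the degree is the first coordinate.
-/

def evenRow (k j : ℤ) : ℤ × ℤ × ℤ × ℤ :=
  (6 + 6 * k - 6 * j + 3 * k ^ 2 - 3 * k * j + 3 * j ^ 2,
   1 + k - 2 * j + k ^ 2 - k * j + j ^ 2,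
   3 + 3 * k - 3 * j + k ^ 2 - k * j + j ^ 2,
   1 + 2 * k - j + k ^ 2 - k * j + j ^ 2)

def oddRow (k j : ℤ) : ℤ × ℤ × ℤ × ℤ :=
  (9 + 9 * k - 6 * j + 3 * k ^ 2 - 3 * k * j + 3 * j ^ 2,
   4 + 4 * k - 2 * j + k ^ 2 - k * j + j ^ 2,
   1 + 2 * k - j + k ^ 2 - k * j + j ^ 2,
   3 + 3 * k - 3 * j + k ^ 2 - k * j + j ^ 2)

theorem cremQ1_evenRow (k j : ℤ) : cremQ1 (evenRow k j) = oddRow k j := by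
  ext <;> simp only [cremQ1, evenRow, oddRow] <;> ring

theorem cremQt2_cremQt_evenRow (k j : ℤ) :
    cremQt2 (cremQt (evenRow k j)) = evenRow k (j + 1) := by
  ext <;> simp only [cremQt, cremQt2, evenRow] <;> ring

theorem cremQt_oddRow_one (k : ℤ) : cremQt (oddRow k 1) = evenRow (k + 1) 1 := by
  ext <;> simp only [cremQt, oddRow, evenRow] <;> ring

namespace IsPencilDiagram

variable {E : ℕ → ℕ → ℤ × ℤ × ℤ × ℤ}

theorem eq_evenRow_of_eq_evenRow_one (hE : IsPencilDiagram E) {k : ℕ} (hk : 1 ≤ k)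
    (h₁ : E (2 * k) 1 = evenRow k 1) {j : ℕ} (hj : 1 ≤ j) (hjk : j ≤ k + 1) :
    E (2 * k) j = evenRow k j := by
  induction j, hj using Nat.le_induction with
  | base => exact h₁
  | succ j hj ih =>
    rw [hE.2.2.2 k j hk hj (by omega), ih (by omega), cremQt2_cremQt_evenRow, Nat.cast_succ]

theorem eq_evenRow_one (hE : IsPencilDiagram E) {k : ℕ} (hk : 1 ≤ k) :
    E (2 * k) 1 = evenRow k 1 := by
  induction k, hk using Nat.le_induction with
  | base =>
    rw [hE.2.1 1 le_rfl, show 2 * 1 - 1 = 1 from rfl, hE.1]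
    rfl
  | succ k hk ih =>
    have h_odd : E (2 * k + 1) 1 = oddRow k 1 := by
      rw [hE.2.2.1 k 1 hk le_rfl (by omega), ih, cremQ1_evenRow]
    rw [hE.2.1 (k + 1) (by omega), show 2 * (k + 1) - 1 = 2 * k + 1 by omega, h_odd,
      cremQt_oddRow_one, Nat.cast_succ]

theorem eq_evenRow (hE : IsPencilDiagram E) {k j : ℕ} (hk : 1 ≤ k) (hj : 1 ≤ j)
    (hjk : j ≤ k + 1) : E (2 * k) j = evenRow k j :=
  hE.eq_evenRow_of_eq_evenRow_one hk (hE.eq_evenRow_one hk) hj hjk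

theorem eq_oddRow (hE : IsPencilDiagram E) {k j : ℕ} (hk : 1 ≤ k) (hj : 1 ≤ j)
    (hjk : j ≤ k + 1) : E (2 * k + 1) j = oddRow k j := by
  rw [hE.2.2.1 k j hk hj hjk, hE.eq_evenRow hk hj hjk, cremQ1_evenRow]

end IsPencilDiagram

/-- For every diagram entry, the first component `D` of `E (i,j)` (the degree of the
generic element of the elliptic pencil at that entry) satisfies
`D = 3·(1 + c² + d² - c + d - c·d)`, where `c (1,1) = 1`, `d (1,1) = -1`, and for `i ≥ 2`:
if `i = 2k` is even then `c = 1 - j`, `d = i/2 + 1 - j`; if `i = 2k+1` is odd then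
`c = j`, `d = j - (i-1)/2 - 2`. -/
theorem degree_of_generic_elliptic_element
    (E : ℕ → ℕ → ℤ × ℤ × ℤ × ℤ) (hE : IsPencilDiagram E) :
    (E 1 1).1 = 3 * (1 + (1 : ℤ) ^ 2 + (-1 : ℤ) ^ 2 - 1 + (-1) - 1 * (-1)) ∧
    ∀ k j : ℕ, 1 ≤ k → 1 ≤ j → j ≤ k + 1 →
      (E (2 * k) j).1 =
        3 * (1 + (1 - (j : ℤ)) ^ 2 + ((k : ℤ) + 1 - (j : ℤ)) ^ 2
          - (1 - (j : ℤ)) + ((k : ℤ) + 1 - (j : ℤ))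
          - (1 - (j : ℤ)) * ((k : ℤ) + 1 - (j : ℤ))) ∧
      (E (2 * k + 1) j).1 =
        3 * (1 + (j : ℤ) ^ 2 + ((j : ℤ) - (k : ℤ) - 2) ^ 2
          - (j : ℤ) + ((j : ℤ) - (k : ℤ) - 2)
          - (j : ℤ) * ((j : ℤ) - (k : ℤ) - 2)) := by
  refine ⟨by rw [hE.1]; norm_num, fun k j hk hj hjk => ⟨?_, ?_⟩⟩
  · rw [hE.eq_evenRow hk hj hjk, evenRow]
    ring
  · rw [hE.eq_oddRow hk hj hjk, oddRow]
    ring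
end

section
/- Let τ ∈ ℂ be a primitive cube root of unity and let F = (x³ − z³)(y³ − z³)(x³ − y³) ∈ ℂ[x,y,z] be the defining polynomial of the nine lines of the dual Hesse arrangement. Then there exists a nonzero constant λ ∈ ℂ such that F(y² − xz, x² − yz, z² − xy) = λ · F(x,y,z) · (x³ + y³ + z³ − 3xyz)³. (This expresses that the quadratic Cremona map Q₁ preserves the dual Hesse arrangement of lines in the sense of strict transform, the extraneous factor being the cube of the product of the three lines of the fundamental triangle of Q₁.) -/
/-- The defining polynomial `F = (x³-z³)(y³-z³)(x³-y³)` of the nine lines of the dual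
Hesse arrangement, as a function of the coordinates. -/
def hesseF (x y z : ℂ) : ℂ := (x ^ 3 - z ^ 3) * (y ^ 3 - z ^ 3) * (x ^ 3 - y ^ 3)

/-- There is a nonzero constant `λ` with
`F (y²-xz, x²-yz, z²-xy) = λ·F (x,y,z)·(x³+y³+z³-3xyz)³`: the quadratic Cremona map `Q₁`
preserves the dual Hesse arrangement of lines in the sense of strict transform, the
extraneous factor being the cube of the product of the three lines of the fundamental
triangle of `Q₁`. -/
theorem cremonaQ1_preserves_dual_hesse (τ : ℂ) (hτ : τ ^ 2 + τ + 1 = 0) :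
    ∃ lam : ℂ, lam ≠ 0 ∧ ∀ x y z : ℂ,
      hesseF (y ^ 2 - x * z) (x ^ 2 - y * z) (z ^ 2 - x * y) =
        lam * hesseF x y z * (x ^ 3 + y ^ 3 + z ^ 3 - 3 * x * y * z) ^ 3 := by
  refine ⟨-1, by norm_num, fun x y z => ?_⟩
  unfold hesseF
  ring
end

section
/- Let τ ∈ ℂ be a primitive cube root of unity and let Q₁(x,y,z) = (y² − xz, x² − yz, z² − xy). Then: (a) for every vector v in P₃(τ) = {(1,τ,1), (1,1,τ), (τ,1,1)} there exist w ∈ P₃(τ²) = {(1,1,τ²), (τ²,1,1), (1,τ²,1)} and a nonzero λ ∈ ℂ with Q₁(v) = λ·w; (b) for every v ∈ P₃(τ²) there exist w ∈ P₃(τ) and nonzero λ ∈ ℂ with Q₁(v) = λ·w; (c) for every v in P₃(∞) = {(0,0,1), (0,1,0), (1,0,0)} there exist w ∈ P₃(∞) and nonzero λ ∈ ℂ with Q₁(v) = λ·w. That is, as a map of ℙ²(ℂ), Q₁ interchanges the point sets P₃(τ) and P₃(τ²) and preserves P₃(∞). -/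
/-- The quadratic Cremona map `Q₁ (x:y:z) = (y²-xz : x²-yz : z²-xy)` on coordinate
vectors. -/
def cremQ1v (v : ℂ × ℂ × ℂ) : ℂ × ℂ × ℂ :=
  (v.2.1 ^ 2 - v.1 * v.2.2, v.1 ^ 2 - v.2.1 * v.2.2, v.2.2 ^ 2 - v.1 * v.2.1)

/-- The quadratic Cremona map `Q_τ (x:y:z) = (τy²-xz : τx²-yz : z²-τ²xy)` on coordinate
vectors. -/
def cremQtv (τ : ℂ) (v : ℂ × ℂ × ℂ) : ℂ × ℂ × ℂ :=
  (τ * v.2.1 ^ 2 - v.1 * v.2.2, τ * v.1 ^ 2 - v.2.1 * v.2.2,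
    v.2.2 ^ 2 - τ ^ 2 * v.1 * v.2.1)

/-- The quadratic Cremona map `Q_{τ²} (x:y:z) = (τ²y²-xz : τ²x²-yz : z²-τxy)` on
coordinate vectors. -/
def cremQt2v (τ : ℂ) (v : ℂ × ℂ × ℂ) : ℂ × ℂ × ℂ :=
  (τ ^ 2 * v.2.1 ^ 2 - v.1 * v.2.2, τ ^ 2 * v.1 ^ 2 - v.2.1 * v.2.2,
    v.2.2 ^ 2 - τ * v.1 * v.2.1)

/-- The set `P₃(1)` of triple points of the dual Hesse arrangement. -/
def P3one (τ : ℂ) : Set (ℂ × ℂ × ℂ) := {(1, 1, 1), (1, τ, τ ^ 2), (1, τ ^ 2, τ)}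

/-- The set `P₃(τ)` of triple points of the dual Hesse arrangement. -/
def P3tau (τ : ℂ) : Set (ℂ × ℂ × ℂ) := {(1, τ, 1), (1, 1, τ), (τ, 1, 1)}

/-- The set `P₃(τ²)` of triple points of the dual Hesse arrangement. -/
def P3tau2 (τ : ℂ) : Set (ℂ × ℂ × ℂ) := {(1, 1, τ ^ 2), (τ ^ 2, 1, 1), (1, τ ^ 2, 1)}

/-- The set `P₃(∞)` of triple points of the dual Hesse arrangement. -/
def P3inf : Set (ℂ × ℂ × ℂ) := {(0, 0, 1), (0, 1, 0), (1, 0, 0)}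

/-- As a map of `ℙ²(ℂ)`, `Q₁` interchanges the point sets `P₃(τ)` and `P₃(τ²)` and
preserves `P₃(∞)`. -/
theorem cremonaQ1_permutes_triple_points (τ : ℂ) (hτ : τ ^ 2 + τ + 1 = 0) :
    (∀ v ∈ P3tau τ, ∃ w ∈ P3tau2 τ, ∃ lam : ℂ, lam ≠ 0 ∧ cremQ1v v = lam • w) ∧
    (∀ v ∈ P3tau2 τ, ∃ w ∈ P3tau τ, ∃ lam : ℂ, lam ≠ 0 ∧ cremQ1v v = lam • w) ∧
    (∀ v ∈ P3inf, ∃ w ∈ P3inf, ∃ lam : ℂ, lam ≠ 0 ∧ cremQ1v v = lam • w) := by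
  have h1 : (1 : ℂ) - τ ≠ 0 := by
    intro h
    have hτ1 : τ = 1 := by linear_combination -h
    rw [hτ1] at hτ; norm_num at hτ
  have h2 : (1 : ℂ) - τ ^ 2 ≠ 0 := by
    intro h
    have hτ1 : τ ^ 2 = 1 := by linear_combination -h
    rw [hτ1] at hτ
    have : τ = -2 := by linear_combination hτ
    rw [this] at hτ1; norm_num at hτ1
  refine ⟨?_, ?_, ?_⟩
  · rintro v (rfl | rfl | rfl)
    · exact ⟨(τ ^ 2, 1, 1), Or.inr (Or.inl rfl), 1 - τ, h1, by
        simp only [cremQ1v, Prod.smul_mk, smul_eq_mul, Prod.mk.injEq]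
        refine ⟨by linear_combination (τ - 1) * hτ, by ring, by ring⟩⟩
    · exact ⟨(1, 1, τ ^ 2), Or.inl rfl, 1 - τ, h1, by
        simp only [cremQ1v, Prod.smul_mk, smul_eq_mul, Prod.mk.injEq]
        refine ⟨by ring, by ring, by linear_combination (τ - 1) * hτ⟩⟩
    · exact ⟨(1, τ ^ 2, 1), Or.inr (Or.inr rfl), 1 - τ, h1, by
        simp only [cremQ1v, Prod.smul_mk, smul_eq_mul, Prod.mk.injEq]
        refine ⟨by ring, by linear_combination (τ - 1) * hτ, by ring⟩⟩
  · rintro v (rfl | rfl | rfl)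
    · exact ⟨(1, 1, τ), Or.inr (Or.inl rfl), 1 - τ ^ 2, h2, by
        simp only [cremQ1v, Prod.smul_mk, smul_eq_mul, Prod.mk.injEq]
        refine ⟨by ring, by ring, by linear_combination (τ ^ 2 - 1) * hτ⟩⟩
    · exact ⟨(1, τ, 1), Or.inl rfl, 1 - τ ^ 2, h2, by
        simp only [cremQ1v, Prod.smul_mk, smul_eq_mul, Prod.mk.injEq]
        refine ⟨by ring, by linear_combination (τ ^ 2 - 1) * hτ, by ring⟩⟩
    · exact ⟨(τ, 1, 1), Or.inr (Or.inr rfl), 1 - τ ^ 2, h2, by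
        simp only [cremQ1v, Prod.smul_mk, smul_eq_mul, Prod.mk.injEq]
        refine ⟨by linear_combination (τ ^ 2 - 1) * hτ, by ring, by ring⟩⟩
  · rintro v (rfl | rfl | rfl)
    · exact ⟨(0, 0, 1), Or.inl rfl, 1, one_ne_zero, by
        simp [cremQ1v]⟩
    · exact ⟨(1, 0, 0), Or.inr (Or.inr rfl), 1, one_ne_zero, by
        simp [cremQ1v]⟩
    · exact ⟨(0, 1, 0), Or.inr (Or.inl rfl), 1, one_ne_zero, by
        simp [cremQ1v]⟩
end

section
/- Let τ ∈ ℂ be a primitive cube root of unity and let Q_τ(x,y,z) = (τy² − xz, τx² − yz, z² − τ²xy). Then: (a) for every vector v in P₃(1) = {(1,1,1), (1,τ,τ²), (1,τ²,τ)} there exist w ∈ P₃(τ²) = {(1,1,τ²), (τ²,1,1), (1,τ²,1)} and a nonzero λ ∈ ℂ with Q_τ(v) = λ·w; (b) for every v ∈ P₃(τ²) there exist w ∈ P₃(1) and nonzero λ ∈ ℂ with Q_τ(v) = λ·w; (c) for every v in P₃(∞) = {(0,0,1), (0,1,0), (1,0,0)} there exist w ∈ P₃(∞) and nonzero λ ∈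 ℂ with Q_τ(v) = λ·w. That is, as a map of ℙ²(ℂ), Q_τ interchanges the point sets P₃(1) and P₃(τ²) and preserves P₃(∞). -/
/-- As a map of `ℙ²(ℂ)`, `Q_τ` interchanges the point sets `P₃(1)` and `P₃(τ²)` and
preserves `P₃(∞)`. -/
theorem cremonaQt_permutes_triple_points (τ : ℂ) (hτ : τ ^ 2 + τ + 1 = 0) :
    (∀ v ∈ P3one τ, ∃ w ∈ P3tau2 τ, ∃ lam : ℂ, lam ≠ 0 ∧ cremQtv τ v = lam • w) ∧
    (∀ v ∈ P3tau2 τ, ∃ w ∈ P3one τ, ∃ lam : ℂ, lam ≠ 0 ∧ cremQtv τ v = lam • w) ∧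
    (∀ v ∈ P3inf, ∃ w ∈ P3inf, ∃ lam : ℂ, lam ≠ 0 ∧ cremQtv τ v = lam • w) := by
  have h1 : τ ≠ 1 := by rintro rfl; norm_num at hτ
  have h0 : τ ≠ 0 := by rintro rfl; norm_num at hτ
  have h2 : τ ^ 2 ≠ 1 := by
    intro h
    have hm : τ = -2 := by linear_combination hτ - h
    rw [hm] at h; norm_num at h
  have hne1 : τ - 1 ≠ 0 := sub_ne_zero.mpr h1
  have hne2 : τ ^ 2 - τ ≠ 0 := by
    have : τ ^ 2 - τ = τ * (τ - 1) := by ring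
    rw [this]; exact mul_ne_zero h0 hne1
  have hne3 : τ - τ ^ 2 ≠ 0 := by
    intro h; exact hne2 (by linear_combination -h)
  have hne4 : τ ^ 2 - 1 ≠ 0 := sub_ne_zero.mpr h2
  refine ⟨?_, ?_, ?_⟩
  · rintro v hv
    simp only [P3one, Set.mem_insert_iff, Set.mem_singleton_iff] at hv
    rcases hv with rfl | rfl | rfl
    · exact ⟨(1, 1, τ ^ 2), by simp [P3tau2], τ - 1, hne1, by
        simp only [cremQtv, Prod.smul_mk, smul_eq_mul, Prod.mk.injEq]
        exact ⟨by ring, by ring, by linear_combination (1 - τ) * hτ⟩⟩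
    · exact ⟨(τ ^ 2, 1, 1), by simp [P3tau2], τ - 1, hne1, by
        simp only [cremQtv, Prod.smul_mk, smul_eq_mul, Prod.mk.injEq]
        exact ⟨by ring, by linear_combination (1 - τ) * hτ,
          by linear_combination (1 - 2 * τ + τ ^ 2) * hτ⟩⟩
    · exact ⟨(1, τ ^ 2, 1), by simp [P3tau2], τ ^ 2 - τ, hne2, by
        simp only [cremQtv, Prod.smul_mk, smul_eq_mul, Prod.mk.injEq]
        exact ⟨by linear_combination (τ ^ 3 - τ ^ 2) * hτ,
          by linear_combination (τ - τ ^ 2) * hτ,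
          by linear_combination (τ - τ ^ 2) * hτ⟩⟩
  · rintro v hv
    simp only [P3tau2, Set.mem_insert_iff, Set.mem_singleton_iff] at hv
    rcases hv with rfl | rfl | rfl
    · exact ⟨(1, 1, 1), by simp [P3one], τ - τ ^ 2, hne3, by
        simp only [cremQtv, Prod.smul_mk, smul_eq_mul, Prod.mk.injEq]
        exact ⟨by ring, by ring, by linear_combination (τ ^ 2 - τ) * hτ⟩⟩
    · exact ⟨(1, τ, τ ^ 2), by simp [P3one], τ - τ ^ 2, hne3, by
        simp only [cremQtv, Prod.smul_mk, smul_eq_mul, Prod.mk.injEq]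
        exact ⟨by ring, by linear_combination (-1 + τ - τ ^ 2 + τ ^ 3) * hτ,
          by linear_combination (1 - τ) * hτ⟩⟩
    · exact ⟨(1, τ ^ 2, τ), by simp [P3one], τ ^ 2 - 1, hne4, by
        simp only [cremQtv, Prod.smul_mk, smul_eq_mul, Prod.mk.injEq]
        exact ⟨by linear_combination (τ ^ 3 - τ ^ 2) * hτ,
          by linear_combination (τ - τ ^ 2) * hτ,
          by linear_combination (1 - τ ^ 2) * hτ⟩⟩
  · rintro v hv
    simp only [P3inf, Set.mem_insert_iff, Set.mem_singleton_iff] at hv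
    rcases hv with rfl | rfl | rfl
    · exact ⟨(0, 0, 1), by simp [P3inf], 1, one_ne_zero, by
        simp only [cremQtv, Prod.smul_mk, smul_eq_mul, Prod.mk.injEq]
        exact ⟨by ring, by ring, by ring⟩⟩
    · exact ⟨(1, 0, 0), by simp [P3inf], τ, h0, by
        simp only [cremQtv, Prod.smul_mk, smul_eq_mul, Prod.mk.injEq]
        exact ⟨by ring, by ring, by ring⟩⟩
    · exact ⟨(0, 1, 0), by simp [P3inf], τ, h0, by
        simp only [cremQtv, Prod.smul_mk, smul_eq_mul, Prod.mk.injEq]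
        exact ⟨by ring, by ring, by ring⟩⟩
end

section
/- Let τ ∈ ℂ be a primitive cube root of unity and let Q_{τ²}(x,y,z) = (τ²y² − xz, τ²x² − yz, z² − τxy). Then: (a) for every vector v in P₃(1) = {(1,1,1), (1,τ,τ²), (1,τ²,τ)} there exist w ∈ P₃(τ) = {(1,τ,1), (1,1,τ), (τ,1,1)} and a nonzero λ ∈ ℂ with Q_{τ²}(v) = λ·w; (b) for every v ∈ P₃(τ) there exist w ∈ P₃(1) and nonzero λ ∈ ℂ with Q_{τ²}(v) = λ·w; (c) for every v in P₃(∞) = {(0,0,1), (0,1,0), (1,0,0)} there exist w ∈ P₃(∞) and nonzero λ ∈ ℂ with Q_{τ²}(v) = λ·w. That is, as a map of ℙ²(ℂ), Q_{τ²} interchanges the point sets P₃(1) and P₃(τ) and preserves P₃(∞). -/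
/-- As a map of `ℙ²(ℂ)`, `Q_{τ²}` interchanges the point sets `P₃(1)` and `P₃(τ)` and
preserves `P₃(∞)`. -/
theorem cremonaQt2_permutes_triple_points (τ : ℂ) (hτ : τ ^ 2 + τ + 1 = 0) :
    (∀ v ∈ P3one τ, ∃ w ∈ P3tau τ, ∃ lam : ℂ, lam ≠ 0 ∧ cremQt2v τ v = lam • w) ∧
    (∀ v ∈ P3tau τ, ∃ w ∈ P3one τ, ∃ lam : ℂ, lam ≠ 0 ∧ cremQt2v τ v = lam • w) ∧
    (∀ v ∈ P3inf, ∃ w ∈ P3inf, ∃ lam : ℂ, lam ≠ 0 ∧ cremQt2v τ v = lam • w) := by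
  have hτ0 : τ ≠ 0 := by rintro rfl; simp at hτ
  have hτ1 : τ ≠ 1 := by rintro rfl; norm_num at hτ
  have h1 : τ ^ 2 - 1 ≠ 0 := by
    intro h
    have hv : τ = -2 := by linear_combination hτ - h
    rw [hv] at hτ; norm_num at hτ
  have h2 : τ - τ ^ 2 ≠ 0 := by
    intro h
    have : 2 * τ = -1 := by linear_combination h + hτ
    have hτv : τ = -1/2 := by linear_combination this / 2
    rw [hτv] at hτ; norm_num at hτ
  have h3 : τ - 1 ≠ 0 := sub_ne_zero.mpr hτ1
  have h4 : τ ^ 2 - τ ≠ 0 := by intro h; exact h2 (by linear_combination -h)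
  have h5 : (τ : ℂ) ^ 2 ≠ 0 := pow_ne_zero _ hτ0
  refine ⟨?_, ?_, ?_⟩
  · rintro v hv
    rcases hv with rfl | rfl | rfl
    · exact ⟨(1, 1, τ), Or.inr (Or.inl rfl), τ ^ 2 - 1, h1, by
        simp only [cremQt2v, Prod.smul_mk, smul_eq_mul, Prod.mk.injEq]
        refine ⟨by ring, by ring, by linear_combination (1 - τ) * hτ⟩⟩
    · exact ⟨(1, τ, 1), Or.inl rfl, τ - τ ^ 2, h2, by
        simp only [cremQt2v, Prod.smul_mk, smul_eq_mul, Prod.mk.injEq]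
        refine ⟨by linear_combination (τ ^ 2 - τ) * hτ, by ring,
          by linear_combination (τ ^ 2 - τ) * hτ⟩⟩
    · exact ⟨(τ, 1, 1), Or.inr (Or.inr rfl), τ ^ 2 - 1, h1, by
        simp only [cremQt2v, Prod.smul_mk, smul_eq_mul, Prod.mk.injEq]
        refine ⟨by linear_combination (τ ^ 4 - τ ^ 3) * hτ, by linear_combination (1 - τ) * hτ,
          by linear_combination (1 - τ) * hτ⟩⟩
  · rintro v hv
    rcases hv with rfl | rfl | rfl
    · exact ⟨(1, τ, τ ^ 2), Or.inr (Or.inl rfl), τ - 1, h3, by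
        simp only [cremQt2v, Prod.smul_mk, smul_eq_mul, Prod.mk.injEq]
        refine ⟨by linear_combination (τ ^ 2 - τ) * hτ, by ring,
          by linear_combination (1 - τ) * hτ⟩⟩
    · exact ⟨(1, 1, 1), Or.inl rfl, τ ^ 2 - τ, h4, by
        simp only [cremQt2v, Prod.smul_mk, smul_eq_mul, Prod.mk.injEq]
        refine ⟨by ring, by ring, by ring⟩⟩
    · exact ⟨(1, τ ^ 2, τ), Or.inr (Or.inr rfl), τ ^ 2 - τ, h4, by
        simp only [cremQt2v, Prod.smul_mk, smul_eq_mul, Prod.mk.injEq]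
        refine ⟨by ring, by linear_combination (τ - 1) * hτ,
          by linear_combination (1 - τ) * hτ⟩⟩
  · rintro v hv
    rcases hv with rfl | rfl | rfl
    · exact ⟨(0, 0, 1), Or.inl rfl, 1, one_ne_zero, by
        simp [cremQt2v]⟩
    · exact ⟨(1, 0, 0), Or.inr (Or.inr rfl), τ ^ 2, h5, by
        simp [cremQt2v]⟩
    · exact ⟨(0, 1, 0), Or.inr (Or.inl rfl), τ ^ 2, h5, by
        simp [cremQt2v]⟩
end
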